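/- For all π ∈ S_n' and all 1 ≤ i ≤ met(π), the prefix of s^i(π) strictly before the entry 0 equals the concatenation s(b_{π,i,1}) s(b_{π,i,2}) ... s(b_{π,i,|C_{π,i}|}); that is, s^i(π)[: ind_{s^i(π)}(0)] = s(b_{π,i,1}) s(b_{π,i,2}) ... s(b_{π,i,|C_{π,i}|}). -/

import Mathlib

/-!
Write `σ = s^{i-1}(π)`, a permutation with least entry `0`, and induct along
`s(L m R) = s(L) s(R) m` with `m` the maximum of `σ`. If `0` lies in `L`, the part of `σ` before
`0` lies inside `L`, and `s(σ)` starts with `s(L)`. If `0` lies in `R`, the part before `0` is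
`L m P` with `P` the part of `R` before `0`; as `m` exceeds every entry it is a right-to-left
maximum, so the blocks are `L` followed by the blocks of `P`, matching `s(σ) = s(L) s(R) m`.
If `0 = m`, then `σ = 0`.
-/

noncomputable section
theorem foldrMaxMem (x : ℕ) (xs : List ℕ) : (x :: xs).foldr max 0 ∈ x :: xs := by
  induction xs generalizing x with
  | nil => simp
  | cons y ys ih =>
    rcases max_choice x ((y :: ys).foldr max 0) with h | h
    · simp only [List.foldr_cons] at h ⊢
      rw [h]; exact List.mem_cons_self
    · simp only [List.foldr_cons] at h ⊢
      rw [h]; exact List.mem_cons_of_mem _ (ih y)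
theorem takeWhileLt (l : List ℕ) (m : ℕ) (hm : m ∈ l) :
    (l.takeWhile (fun y => y ≠ m)).length < l.length := by
  have hd : l.dropWhile (fun y => y ≠ m) ≠ [] := by
    intro h; rw [List.dropWhile_eq_nil_iff] at h; simpa using h m hm
  have h1 : (l.takeWhile (fun y => y ≠ m)).length
      + (l.dropWhile (fun y => y ≠ m)).length = l.length := by
    rw [← List.length_append, List.takeWhile_append_dropWhile]
  have h2 : 0 < (l.dropWhile (fun y => y ≠ m)).length := List.length_pos_iff.mpr hd
  omega
theorem dropWhileDropLt (l : List ℕ) (m : ℕ) (hl : l ≠ []) :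
    ((l.dropWhile (fun y => y ≠ m)).drop 1).length < l.length := by
  have h1 : (l.takeWhile (fun y => y ≠ m)).length
      + (l.dropWhile (fun y => y ≠ m)).length = l.length := by
    rw [← List.length_append, List.takeWhile_append_dropWhile]
  have h2 : 0 < l.length := List.length_pos_iff.mpr hl
  rw [List.length_drop]; omega

/-- West's stack-sorting map `s`: `s([]) = []`, `s(L m R) = s(L) s(R) m` for `m` the maximum. -/
def ss : List ℕ → List ℕ
  | [] => []
  | x :: xs =>
    ss ((x :: xs).takeWhile (fun y => y ≠ (x :: xs).foldr max 0)) ++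
    ss (((x :: xs).dropWhile (fun y => y ≠ (x :: xs).foldr max 0)).drop 1) ++
    [(x :: xs).foldr max 0]
termination_by l => l.length
decreasing_by
  · exact takeWhileLt _ _ (foldrMaxMem _ _)
  · exact dropWhileDropLt _ _ (by simp)

/-- `met π` : the least `k ≥ 0` with `s^k(π)` increasing. -/
def met (l : List ℕ) : ℕ := sInf {k | List.Pairwise (· < ·) (ss^[k] l)}

/-- Right-to-left maxima of a list, read from left to right.  For the prefix of `s^{i-1}(π)`
before `0` this is exactly the column sequence `C_{π,i}`. -/
def rtlMax : List ℕ → List ℕ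
  | [] => []
  | x :: xs => if ∀ y ∈ xs, y < x then x :: rtlMax xs else rtlMax xs

/-- The blocks `b_{π,i,j}`: the segments strictly between consecutive right-to-left maxima. -/
def blocksOf : List ℕ → List (List ℕ)
  | [] => []
  | x :: xs =>
    if ∀ y ∈ xs, y < x then [] :: blocksOf xs
    else
      match blocksOf xs with
      | [] => [[x]]
      | b :: bs => (x :: b) :: bs

/-- The part of `s^{i-1}(π)` strictly before the entry `0`. -/
def prefixAt (π : List ℕ) (i : ℕ) : List ℕ := (ss^[i-1] π).takeWhile (fun x => x ≠ 0)

/-- The column sequence `C_{π,i}`. -/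
def colSeqAt (π : List ℕ) (i : ℕ) : List ℕ := rtlMax (prefixAt π i)

/-- The block sequence `B_{π,i}`. -/
def blocksAt (π : List ℕ) (i : ℕ) : List (List ℕ) := blocksOf (prefixAt π i)

/-- `col_π(v)`: the unique `i` with `v ∈ C_{π,i}` (as the least such `i ≥ 1`). -/
def colOf (π : List ℕ) (v : ℕ) : ℕ := sInf {i | 1 ≤ i ∧ v ∈ colSeqAt π i}

/-- `colpos_π(v)`: the (1-indexed) position of `v` in `C_{π,col_π(v)}`. -/
def colposOf (π : List ℕ) (v : ℕ) : ℕ := (colSeqAt π (colOf π v)).idxOf v + 1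

/-- `leftof_π(v) = c_{π,col_π(v)-1,j}` for the unique `j` with `v = max(b_{π,col_π(v)-1,j})`. -/
def leftOf (π : List ℕ) (v : ℕ) : ℕ :=
  (colSeqAt π (colOf π v - 1)).getD
    (((blocksAt π (colOf π v - 1)).map (fun b => b.foldr max 0)).idxOf v) 0

/-- `row_π(v)`: follow `leftof` back to column 1 and take `colpos` there. -/
def rowOf (π : List ℕ) (v : ℕ) : ℕ := colposOf π ((leftOf π)^[colOf π v - 1] v)

/-- `upof_π(v) = c_{π,col_π(v),colpos_π(v)-1}`. -/
def upOf (π : List ℕ) (v : ℕ) : ℕ := (colSeqAt π (colOf π v)).getD (colposOf π v - 2) 0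

/-- The stack-sorting tableau `T_π(v) = (col_π(v), row_π(v))`. -/
def Tmap (π : List ℕ) (v : ℕ) : ℕ × ℕ := (colOf π v, rowOf π v)

/-- The composition `α_π = (|{v ∈ [n] : row_π(v) = j}|)_{j=1}^{|C_{π,1}|}` (here `n = |π| - 1`). -/
def alphaOf (π : List ℕ) : List ℕ :=
  (List.range' 1 (colSeqAt π 1).length).map
    (fun j => ((Finset.Icc 1 (π.length - 1)).filter (fun v => rowOf π v = j)).card)

/-- Membership in the composition diagram `D(α) = {(i,j) : 1 ≤ j ≤ ℓ(α), 1 ≤ i ≤ α_j}`. -/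
def inDiagram (α : List ℕ) (p : ℕ × ℕ) : Prop :=
  1 ≤ p.1 ∧ 1 ≤ p.2 ∧ p.2 ≤ α.length ∧ p.1 ≤ α.getD (p.2 - 1) 0

instance inDiagramDec (α : List ℕ) : DecidablePred (inDiagram α) := fun p => by
  unfold inDiagram; infer_instance

/-- `D(α)` as a finite set. -/
def diagramFinset (α : List ℕ) : Finset (ℕ × ℕ) :=
  (Finset.range (α.foldr max 0 + 1) ×ˢ Finset.range (α.length + 1)).filter
    (fun p => inDiagram α p)

/-- `colpos_α(i,j) = |{(i,j') ∈ D(α) : j' < j} ∪ {(i,0)}|`. -/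
def colposA (α : List ℕ) (p : ℕ × ℕ) : ℕ :=
  (((Finset.range p.2).filter (fun j' => inDiagram α (p.1, j'))) ∪ {0}).card

/-- `leftof_α(i,j) = (i-1,j)`. -/
def leftA (p : ℕ × ℕ) : ℕ × ℕ := (p.1 - 1, p.2)

/-- `upof_α(i,j) = (i, max({j' < j : (i,j') ∈ D(α)} ∪ {0}))`. -/
def upA (α : List ℕ) (p : ℕ × ℕ) : ℕ × ℕ :=
  (p.1, (((Finset.range p.2).filter (fun j' => inDiagram α (p.1, j'))) ∪ {0}).sup id)

/-- The hook length `h_α(i,j)`. -/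
def hook (α : List ℕ) (p : ℕ × ℕ) : ℕ :=
  if 1 < p.1 then
    ((diagramFinset α).filter (fun q =>
      q.1 ≤ p.1 - 1 ∧ (upA α (p.1 - 1, p.2)).2 < q.2 ∧ q.2 ≤ p.2)).card
  else 1

/-- The segment `B_{π,T}(i,j,k)` of `s^{k-1}(π)`, where `U = T⁻¹`. -/
def Bseg (π : List ℕ) (α : List ℕ) (U : ℕ × ℕ → ℕ) (i j k : ℕ) : List ℕ :=
  if (upA α (leftA (i, j))).2 > 0 then
    ((ss^[k-1] π).take ((ss^[k-1] π).idxOf (U (k, j)) + 1)).drop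
      ((ss^[k-1] π).idxOf (U (k, (upA α (leftA (i, j))).2)) + 1)
  else
    (ss^[k-1] π).take ((ss^[k-1] π).idxOf (U (k, j)) + 1)

/-- The inverse `T_π⁻¹` of the stack-sorting tableau. -/
def invTmap (π : List ℕ) : ℕ × ℕ → ℕ :=
  Function.invFunOn (Tmap π) (Set.Icc 1 (π.length - 1))

/-- A linear extension of `D(α)`, encoded as the list `[T(1), …, T(n)]`:
`T` is a bijection `{1,…,n} → D(α)` with `T(a) ≥_D T(b) → a ≥ b`. -/
def isLinExt (α : List ℕ) (ℓ : List (ℕ × ℕ)) : Prop :=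
  ℓ.Nodup ∧ (∀ p, p ∈ ℓ ↔ inDiagram α p) ∧
  ∀ a b, a < ℓ.length → b < ℓ.length →
    (ℓ.getD a (0, 0)).1 ≤ (ℓ.getD b (0, 0)).1 ∧ (ℓ.getD a (0, 0)).2 ≤ (ℓ.getD b (0, 0)).2 →
    b ≤ a
end


namespace List

variable {α : Type*} [DecidableEq α] {a : α} {l l₁ l₂ : List α}

theorem takeWhile_ne_append_cons_dropWhile (h : a ∈ l) :
    l.takeWhile (· ≠ a) ++ a :: (l.dropWhile (· ≠ a)).drop 1 = l := by
  induction l with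
  | nil => simp at h
  | cons x xs ih =>
    by_cases hx : x = a
    · simp [hx]
    · rw [takeWhile_cons_of_pos (p := (· ≠ a)) (by simpa using hx),
        dropWhile_cons_of_pos (p := (· ≠ a)) (by simpa using hx), cons_append,
        ih ((mem_cons.mp h).resolve_left (Ne.symm hx))]

theorem takeWhile_ne_append_of_notMem (h : a ∉ l₁) :
    (l₁ ++ l₂).takeWhile (· ≠ a) = l₁ ++ l₂.takeWhile (· ≠ a) :=
  takeWhile_append_of_pos fun x hx => by simpa using ne_of_mem_of_not_mem hx h

theorem takeWhile_ne_append_of_mem (h : a ∈ l₁) :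
    (l₁ ++ l₂).takeWhile (· ≠ a) = l₁.takeWhile (· ≠ a) := by
  induction l₁ with
  | nil => simp at h
  | cons x xs ih =>
    by_cases hx : x = a
    · simp [hx]
    · rw [cons_append, takeWhile_cons_of_pos (p := (· ≠ a)) (by simpa using hx),
        takeWhile_cons_of_pos (p := (· ≠ a)) (by simpa using hx),
        ih ((mem_cons.mp h).resolve_left (Ne.symm hx))]

theorem Nodup.takeWhile_ne_append_cons (h : (l₁ ++ a :: l₂).Nodup) :
    (l₁ ++ a :: l₂).takeWhile (· ≠ a) = l₁ := by
  rw [takeWhile_ne_append_of_notMem fun ha => disjoint_of_nodup_append h ha mem_cons_self]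
  simp

end List

theorem exists_ss_eq_of_ne_nil {l : List ℕ} (hl : l ≠ []) :
    ∃ L m R, l = L ++ m :: R ∧ (∀ x ∈ l, x ≤ m) ∧ ss l = ss L ++ ss R ++ [m] := by
  obtain ⟨x, xs, rfl⟩ := List.exists_cons_of_ne_nil hl
  exact ⟨_, _, _, (List.takeWhile_ne_append_cons_dropWhile (foldrMaxMem x xs)).symm,
    fun y hy => List.le_max_of_le hy le_rfl, by rw [ss]⟩

theorem ss_perm (l : List ℕ) : (ss l).Perm l := by
  rcases eq_or_ne l [] with rfl | hl
  · rw [ss]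
  obtain ⟨L, m, R, rfl, -, hss⟩ := exists_ss_eq_of_ne_nil hl
  rw [hss, List.append_assoc]
  exact (ss_perm L).append (((ss_perm R).append_right [m]).trans (List.perm_append_singleton m R))
termination_by l.length
decreasing_by all_goals subst_vars; simp only [List.length_append, List.length_cons]; omega

theorem iterate_ss_perm (k : ℕ) (l : List ℕ) : (ss^[k] l).Perm l := by
  induction k with
  | zero => rfl
  | succ k ih => rw [Function.iterate_succ_apply']; exact (ss_perm _).trans ih

theorem blocksOf_append_cons {L R : List ℕ} {m : ℕ} (hL : ∀ x ∈ L, x < m)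
    (hR : ∀ x ∈ R, x < m) :
    blocksOf (L ++ m :: R) = L :: blocksOf R := by
  induction L with
  | nil => rw [List.nil_append, blocksOf, if_pos hR]
  | cons y ys ih =>
    have hy : ¬ ∀ x ∈ ys ++ m :: R, x < y := fun h => (hL y (by simp)).not_gt (h m (by simp))
    rw [List.cons_append, blocksOf, if_neg hy, ih fun x hx => hL x (by simp [hx])]

theorem exists_ss_eq_flatten_blocksOf_append {l : List ℕ} {z : ℕ} (hl : l.Nodup) (hz : z ∈ l)
    (hmin : ∀ x ∈ l, z ≤ x) :
    ∃ T, ss l = ((blocksOf (l.takeWhile (· ≠ z))).map ss).flatten ++ z :: T := by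
  obtain ⟨L, m, R, rfl, hmax, hss⟩ := exists_ss_eq_of_ne_nil (List.ne_nil_of_mem hz)
  have hm : m ∉ L ++ R := (List.nodup_cons.mp (List.nodup_middle.mp hl)).1
  have hlt : ∀ x ∈ L ++ R, x < m := fun x hx =>
    (hmax x (by simp at hx ⊢; tauto)).lt_of_ne (ne_of_mem_of_not_mem hx hm)
  rcases List.mem_append.mp hz with hzL | hzmR
  · obtain ⟨T, hT⟩ := exists_ss_eq_flatten_blocksOf_append hl.of_append_left hzL
      fun x hx => hmin x (by simp [hx])
    refine ⟨T ++ ss R ++ [m], ?_⟩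
    rw [hss, hT, List.takeWhile_ne_append_of_mem hzL]
    simp
  rcases List.mem_cons.mp hzmR with rfl | hzR
  · have hLR : L ++ R = [] := List.eq_nil_iff_forall_not_mem.mpr fun x hx =>
      (hlt x hx).not_ge (hmin x (by simp at hx ⊢; tauto))
    obtain ⟨rfl, rfl⟩ := List.append_eq_nil_iff.mp hLR
    rw [List.nil_append, ss.eq_1, List.nil_append] at hss
    exact ⟨[], by simp [hss, blocksOf]⟩
  · have hzL : z ∉ L := fun h => List.disjoint_of_nodup_append hl h hzmR
    obtain ⟨T, hT⟩ := exists_ss_eq_flatten_blocksOf_append hl.of_append_right.of_cons hzR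
      fun x hx => hmin x (by simp [hx])
    refine ⟨T ++ [m], ?_⟩
    have hmz : m ≠ z := (hlt z (by simp [hzR])).ne'
    rw [hss, hT, List.takeWhile_ne_append_of_notMem hzL,
      List.takeWhile_cons_of_pos (by simpa using hmz),
      blocksOf_append_cons (fun x hx => hlt x (by simp [hx]))
        (fun x hx => hlt x (by simp [(List.takeWhile_sublist _).subset hx]))]
    simp
termination_by l.length
decreasing_by all_goals subst_vars; simp only [List.length_append, List.length_cons]; omega

theorem stmt_7_general (n : ℕ) (π : List ℕ) (hπ : π.Perm (List.range (n + 1)))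
    (i : ℕ) (hi : 1 ≤ i) :
    (ss^[i] π).takeWhile (fun x => x ≠ 0) = ((blocksAt π i).map ss).flatten := by
  obtain ⟨k, rfl⟩ := Nat.exists_eq_add_of_le' hi
  have hσ : (ss^[k] π).Perm (List.range (n + 1)) := (iterate_ss_perm k π).trans hπ
  obtain ⟨T, hT⟩ := exists_ss_eq_flatten_blocksOf_append (hσ.nodup_iff.mpr List.nodup_range)
    (hσ.mem_iff.mpr (by simp)) fun x _ => Nat.zero_le x
  have hnd : (ss (ss^[k] π)).Nodup := ((ss_perm _).trans hσ).nodup_iff.mpr List.nodup_range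
  rw [hT] at hnd
  rw [Function.iterate_succ_apply', hT, hnd.takeWhile_ne_append_cons, blocksAt, prefixAt,
    Nat.add_sub_cancel]

/-- Lemma 3.3: for `π ∈ Sₙ'` and `1 ≤ i ≤ met(π)`, the prefix of `s^i(π)` before `0`
equals `s(b_{π,i,1}) ⋯ s(b_{π,i,|C_{π,i}|})`. -/
theorem stmt_7 (n : ℕ) (π : List ℕ) (hπ : π.Perm (List.range (n + 1)))
    (h0 : π.getLast? = some 0) (i : ℕ) (hi : 1 ≤ i) (him : i ≤ met π) :
    (ss^[i] π).takeWhile (fun x => x ≠ 0) = ((blocksAt π i).map ss).flatten :=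
  stmt_7_general n π hπ i hi
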